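/- arXiv:2302.11379 — 2 statements merged into one kernel-verified Lean document; each statement's English description precedes it below -/
import Mathlib

section
/- For the last-passage time T on V = ([0,n]∩ℤ)^d with weight configuration ω, a vertex v lies on some geodesic (maximizing path) if and only if ω_v ≥ k_v, where k_v is the critical value computed from the weights off v; moreover if ω_v > k_v then v lies on every geodesic. -/
/-!
Write `ω_x` for `ω` with the weight at `v` replaced by `x`. Changing `x` shifts the weight of every
path through `v` by the same amount and leaves the other paths alone. Hence, if `γ₀` is a path
through `v` of maximal `ω`-weight `w(γ₀)` among such paths, `v` lies on an `ω_x`-geodesic iff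
`x ≥ w(γ) - w(γ₀) + ω v` for every path `γ` avoiding `v`. The admissible `x ≥ 0` are thus the
upper bounds of a finite set containing `0`, so their infimum `k_v` is admissible itself. Both
claims then follow from comparing `ω = ω_{ω v}` with `ω_{k_v}`: raising the weight at `v` keeps
`v` on a geodesic, and raising it strictly makes every path through `v` beat every path avoiding it.
-/

open MeasureTheory

/-- An up-right nearest-neighbour step in the lattice (modelled on `ℕ^d`). -/
def IsStep {d : ℕ} (u v : Fin d → ℕ) : Prop :=
  ∃ i : Fin d, v = Function.update u i (u i + 1)

/-- `γ` is a directed up-right nearest-neighbour path from `(0,…,0)` to `(n,…,n)`. -/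
def IsPath (d n : ℕ) (γ : List (Fin d → ℕ)) : Prop :=
  γ.Chain' IsStep ∧ γ.head? = some (fun _ => 0) ∧ γ.getLast? = some (fun _ => n)

/-- The last-passage time: the maximal weight sum over directed paths. -/
noncomputable def passageTime (d n : ℕ) (ω : (Fin d → ℕ) → ℝ) : ℝ :=
  sSup {S : ℝ | ∃ γ : List (Fin d → ℕ), IsPath d n γ ∧ S = (γ.map ω).sum}

/-- The critical weight `k_v`: the smallest `x ≥ 0` such that `v` lies on some maximizing
path for the configuration with the weight at `v` replaced by `x`. -/
noncomputable def critical (d n : ℕ) (ω : (Fin d → ℕ) → ℝ) (v : Fin d → ℕ) : ℝ :=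
  sInf {x : ℝ | 0 ≤ x ∧ ∃ γ : List (Fin d → ℕ), IsPath d n γ ∧ v ∈ γ ∧
    (γ.map (Function.update ω v x)).sum = passageTime d n (Function.update ω v x)}

open Function Relation

namespace List

variable {α : Type*}

lemma sum_map_update_of_mem {M : Type*} [DecidableEq α] [AddCommGroup M] {l : List α}
    (hl : l.Nodup) {a : α} (ha : a ∈ l) (f : α → M) (b : M) :
    (l.map (update f a b)).sum = (l.map f).sum + (b - f a) := by
  have ha' : a ∈ l.toFinset := mem_toFinset.2 ha
  rw [← sum_toFinset _ hl, ← sum_toFinset _ hl, Finset.sum_update_of_mem ha',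
    Finset.sdiff_singleton_eq_erase, ← Finset.add_sum_erase _ _ ha']
  abel

lemma sum_map_update_of_not_mem {M : Type*} [DecidableEq α] [AddCommMonoid M] {l : List α}
    {a : α} (ha : a ∉ l) (f : α → M) (b : M) :
    (l.map (update f a b)).sum = (l.map f).sum :=
  congrArg sum <| map_congr_left fun _ hx => update_of_ne (ne_of_mem_of_not_mem hx ha) _ _

lemma exists_isChain_mem_of_reflTransGen {r : α → α → Prop} {a b c : α}
    (hab : ReflTransGen r a b) (hbc : ReflTransGen r b c) :
    ∃ l : List α, l.IsChain r ∧ l.head? = some a ∧ l.getLast? = some c ∧ b ∈ l := by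
  obtain ⟨l₁, hl₁, hb⟩ := exists_isChain_cons_of_relationReflTransGen hab
  obtain ⟨l₂, hl₂, hc⟩ := exists_isChain_cons_of_relationReflTransGen hbc
  refine ⟨a :: l₁ ++ l₂, isChain_append.2 ⟨hl₁, hl₂.tail, ?_⟩, rfl, ?_, ?_⟩
  · intro x hx y hy
    rw [getLast?_eq_some_getLast (cons_ne_nil a l₁), hb, Option.mem_some_iff] at hx
    exact hx ▸ hl₂.rel_head? hy
  · cases l₂ with
    | nil => simp_all [getLast?_eq_some_getLast]
    | cons y t => simp_all [getLast?_eq_some_getLast]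
  · exact mem_append_left _ (hb ▸ getLast_mem _)

end List

namespace Set.Finite

lemma finite_nodup_lists {α : Type*} {s : Set α} (hs : s.Finite) :
    {l : List α | l.Nodup ∧ ∀ x ∈ l, x ∈ s}.Finite := by
  have := hs.to_subtype
  refine ((List.finite_length_le s (Nat.card s)).image (List.map (↑))).subset ?_
  rintro l ⟨hnd, hl⟩
  lift l to List s using hl
  exact ⟨l, (List.Nodup.of_map _ hnd).length_le_natCard, rfl⟩

end Set.Finite

section

variable {d n : ℕ}

lemma isStep_iff_covBy {u v : Fin d → ℕ} : IsStep u v ↔ u ⋖ v := by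
  simp [IsStep, Pi.covBy_iff_exists_right_eq, eq_comm]

namespace IsPath

variable {γ : List (Fin d → ℕ)}

lemma pairwise_lt (h : IsPath d n γ) : γ.Pairwise (· < ·) :=
  (h.1.imp fun _ _ hs => (isStep_iff_covBy.1 hs).lt).pairwise

lemma nodup (h : IsPath d n γ) : γ.Nodup :=
  h.pairwise_lt.nodup

lemma le_of_mem (h : IsPath d n γ) {x : Fin d → ℕ} (hx : x ∈ γ) : x ≤ fun _ => n := by
  refine h.1.backwards_induction (· ≤ fun _ => n) γ
    (fun _ _ hs hy => (isStep_iff_covBy.1 hs).le.trans hy) (fun hne => ?_) x hx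
  have hl := h.2.2
  rw [List.getLast?_eq_some_getLast hne, Option.some_inj] at hl
  exact hl.le

end IsPath

lemma setOf_isPath_finite : {γ | IsPath d n γ}.Finite :=
  (Set.finite_Iic _).finite_nodup_lists.subset fun _ h => ⟨h.nodup, fun _ hx => h.le_of_mem hx⟩

lemma exists_isPath_mem {v : Fin d → ℕ} (hv : ∀ i, v i ≤ n) : ∃ γ, IsPath d n γ ∧ v ∈ γ := by
  obtain ⟨γ, hγ, h0, hn, hvγ⟩ := List.exists_isChain_mem_of_reflTransGen
    (le_iff_reflTransGen_covBy.1 (fun i => Nat.zero_le (v i)))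
    (le_iff_reflTransGen_covBy.1 (show v ≤ fun _ => n from hv))
  exact ⟨γ, ⟨hγ.imp fun _ _ => isStep_iff_covBy.2, h0, hn⟩, hvγ⟩

variable {ω : (Fin d → ℕ) → ℝ} {v : Fin d → ℕ} {γ₀ : List (Fin d → ℕ)} {x y : ℝ}

def OnGeodesic (d n : ℕ) (ω : (Fin d → ℕ) → ℝ) (v : Fin d → ℕ) : Prop :=
  ∃ γ : List (Fin d → ℕ), IsPath d n γ ∧ v ∈ γ ∧ (γ.map ω).sum = passageTime d n ω

lemma sum_le_passageTime (ω : (Fin d → ℕ) → ℝ) {γ : List (Fin d → ℕ)} (hγ : IsPath d n γ) :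
    (γ.map ω).sum ≤ passageTime d n ω := by
  have hbdd := ((setOf_isPath_finite (n := n)).image fun γ => (γ.map ω).sum).bddAbove
  refine le_csSup (hbdd.mono ?_) ⟨γ, hγ, rfl⟩
  rintro _ ⟨γ, hγ, rfl⟩
  exact Set.mem_image_of_mem _ hγ

lemma passageTime_eq_sum_of_forall_le (hγ₀ : IsPath d n γ₀)
    (h : ∀ γ, IsPath d n γ → (γ.map ω).sum ≤ (γ₀.map ω).sum) :
    passageTime d n ω = (γ₀.map ω).sum := by
  refine le_antisymm (csSup_le ⟨_, γ₀, hγ₀, rfl⟩ ?_) (sum_le_passageTime ω hγ₀)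
  rintro _ ⟨γ, hγ, rfl⟩
  exact h γ hγ

lemma sum_map_update_eq_passageTime_iff (hγ₀ : IsPath d n γ₀) (hv : v ∈ γ₀) :
    (γ₀.map (update ω v x)).sum = passageTime d n (update ω v x) ↔
      (∀ γ, IsPath d n γ → v ∈ γ → (γ.map ω).sum ≤ (γ₀.map ω).sum) ∧
      (∀ γ, IsPath d n γ → v ∉ γ → (γ.map ω).sum ≤ (γ₀.map (update ω v x)).sum) := by
  have shift {γ : List (Fin d → ℕ)} (hγ : IsPath d n γ) (hvγ : v ∈ γ) :
      (γ.map (update ω v x)).sum = (γ.map ω).sum + (x - ω v) :=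
    List.sum_map_update_of_mem hγ.nodup hvγ ω x
  constructor
  · intro hgeo
    refine ⟨fun γ hγ hvγ => ?_, fun γ hγ hvγ => ?_⟩
    · have := sum_le_passageTime (update ω v x) hγ
      rw [← hgeo, shift hγ hvγ, shift hγ₀ hv] at this
      linarith
    · rw [hgeo, ← List.sum_map_update_of_not_mem hvγ ω x]
      exact sum_le_passageTime _ hγ
  · rintro ⟨hthrough, havoid⟩
    refine (passageTime_eq_sum_of_forall_le hγ₀ fun γ hγ => ?_).symm
    by_cases hvγ : v ∈ γ
    · rw [shift hγ hvγ, shift hγ₀ hv]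
      linarith [hthrough γ hγ hvγ]
    · rw [List.sum_map_update_of_not_mem hvγ]
      exact havoid γ hγ hvγ

namespace OnGeodesic

lemma update_mono (h : OnGeodesic d n (update ω v x) v) (hxy : x ≤ y) :
    OnGeodesic d n (update ω v y) v := by
  obtain ⟨γ, hγ, hv, hgeo⟩ := h
  obtain ⟨hthrough, havoid⟩ := (sum_map_update_eq_passageTime_iff hγ hv).1 hgeo
  refine ⟨γ, hγ, hv, (sum_map_update_eq_passageTime_iff hγ hv).2 ⟨hthrough, fun γ' hγ' hv' => ?_⟩⟩
  have := havoid γ' hγ' hv'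
  rw [List.sum_map_update_of_mem hγ.nodup hv] at this ⊢
  linarith

lemma mem_of_update_lt (h : OnGeodesic d n (update ω v x) v) (hx : x < ω v)
    {γ : List (Fin d → ℕ)} (hγ : IsPath d n γ) (hgeo : (γ.map ω).sum = passageTime d n ω) :
    v ∈ γ := by
  obtain ⟨γ₀, hγ₀, hv, hgeo₀⟩ := h
  by_contra hvγ
  have hle := ((sum_map_update_eq_passageTime_iff hγ₀ hv).1 hgeo₀).2 γ hγ hvγ
  rw [List.sum_map_update_of_mem hγ₀.nodup hv] at hle
  linarith [sum_le_passageTime ω hγ₀]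

end OnGeodesic

lemma onGeodesic_update_iff (hγ₀ : IsPath d n γ₀) (hv : v ∈ γ₀)
    (hmax : ∀ γ, IsPath d n γ → v ∈ γ → (γ.map ω).sum ≤ (γ₀.map ω).sum) :
    OnGeodesic d n (update ω v x) v ↔
      ∀ γ, IsPath d n γ → v ∉ γ → (γ.map ω).sum - (γ₀.map ω).sum + ω v ≤ x := by
  have shift := List.sum_map_update_of_mem hγ₀.nodup hv ω x
  constructor
  · rintro ⟨γ₁, hγ₁, hv₁, hgeo⟩ γ hγ hvγ
    have hle := ((sum_map_update_eq_passageTime_iff hγ₁ hv₁).1 hgeo).2 γ hγ hvγ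
    rw [List.sum_map_update_of_mem hγ₁.nodup hv₁] at hle
    linarith [hmax γ₁ hγ₁ hv₁]
  · intro h
    refine ⟨γ₀, hγ₀, hv, (sum_map_update_eq_passageTime_iff hγ₀ hv).2 ⟨hmax, fun γ hγ hvγ => ?_⟩⟩
    linarith [h γ hγ hvγ]

lemma isLeast_critical (hv : ∀ i, v i ≤ n) :
    IsLeast {x | 0 ≤ x ∧ OnGeodesic d n (update ω v x) v} (critical d n ω v) := by
  obtain ⟨γ₀, ⟨hγ₀, hv₀⟩, hmax⟩ := Set.exists_max_image {γ | IsPath d n γ ∧ v ∈ γ}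
    (fun γ => (γ.map ω).sum) (setOf_isPath_finite.subset fun _ h => h.1) (exists_isPath_mem hv)
  set S : Set ℝ := insert 0 ((fun γ => (γ.map ω).sum - (γ₀.map ω).sum + ω v) ''
    {γ | IsPath d n γ ∧ v ∉ γ})
  have hS : {x | 0 ≤ x ∧ OnGeodesic d n (update ω v x) v} = upperBounds S := by
    ext x
    rw [upperBounds_insert, Set.mem_inter_iff, Set.mem_Ici, mem_upperBounds, Set.forall_mem_image,
      Set.mem_ofPred_eq, onGeodesic_update_iff hγ₀ hv₀ fun γ hγ hvγ => hmax γ ⟨hγ, hvγ⟩]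
    simp only [Set.mem_ofPred_eq, and_imp]
  have hbdd : BddAbove S :=
    ((setOf_isPath_finite.subset fun _ h => h.1).image _).insert 0 |>.bddAbove
  have hcrit : critical d n ω v = sSup S := by
    rw [← csInf_upperBounds_eq_csSup hbdd (Set.insert_nonempty 0 _), ← hS]
    rfl
  rw [hcrit, hS]
  exact isLUB_csSup (Set.insert_nonempty 0 _) hbdd

end

theorem mem_geodesic_iff_general (d n : ℕ)
    (ω : (Fin d → ℕ) → ℝ) (hω : ∀ u, 0 ≤ ω u)
    (v : Fin d → ℕ) (hv : ∀ i, v i ≤ n) :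
    ((∃ γ : List (Fin d → ℕ), IsPath d n γ ∧ v ∈ γ ∧ (γ.map ω).sum = passageTime d n ω)
        ↔ critical d n ω v ≤ ω v)
    ∧ (critical d n ω v < ω v →
        ∀ γ : List (Fin d → ℕ), IsPath d n γ → (γ.map ω).sum = passageTime d n ω → v ∈ γ) := by
  obtain ⟨⟨-, hcrit⟩, hleast⟩ := isLeast_critical (ω := ω) hv
  refine ⟨⟨fun h => hleast ⟨hω v, ?_⟩, fun hle => ?_⟩, fun hlt _ => hcrit.mem_of_update_lt hlt⟩
  · rwa [update_eq_self]
  · have := hcrit.update_mono hle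
    rwa [update_eq_self] at this

/-- A vertex `v` lies on some geodesic iff `ω_v ≥ k_v`; moreover if `ω_v > k_v` then `v` lies
on every geodesic. -/
theorem mem_geodesic_iff (d n : ℕ) (hd : 1 ≤ d) (hn : 1 ≤ n)
    (ω : (Fin d → ℕ) → ℝ) (hω : ∀ u, 0 ≤ ω u)
    (v : Fin d → ℕ) (hv : ∀ i, v i ≤ n) :
    ((∃ γ : List (Fin d → ℕ), IsPath d n γ ∧ v ∈ γ ∧ (γ.map ω).sum = passageTime d n ω)
        ↔ critical d n ω v ≤ ω v)
    ∧ (critical d n ω v < ω v →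
        ∀ γ : List (Fin d → ℕ), IsPath d n γ → (γ.map ω).sum = passageTime d n ω → v ∈ γ) :=
  mem_geodesic_iff_general d n ω hω v hv
end

section
/- Let X be a random variable with stretched-exponential tail P(X > x) = e^{−x^β} for x ≥ 0 with β ∈ (0,1]. Then there exists c > 0 such that Var(X | X > k) ≥ c for all k ≥ 0. -/
open MeasureTheory ProbabilityTheory

open Real Set

/-! Conditioned on `X > k` the tail is `P(X > x | X > k) = e^{k^β - x^β}`, so the conditional
quantiles `m = (k^β + 1)^{1/β}` and `M = (k^β + 2)^{1/β}` leave mass `1 - e^{-1}` on `X ≤ m` and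
`e^{-2}` on `X > M`. Since `x ↦ x^{1/β}` is superadditive for `β ≤ 1`, `M ≥ m + 1`; wherever the
conditional mean lies, one of these two events keeps `X` at distance at least `1/2` from it, and
Chebyshev's inequality gives `Var(X | X > k) ≥ e^{-2}/4`. -/

def HasStretchedExpTail {Ω : Type*} [MeasurableSpace Ω] (μ : Measure Ω) (X : Ω → ℝ) (β : ℝ) :
    Prop :=
  ∀ x : ℝ, 0 ≤ x → μ {ω | x < X ω} = ENNReal.ofReal (exp (-(x ^ β)))

theorem mul_sq_le_variance_of_le_measureReal {Ω : Type*} [MeasurableSpace Ω] {ν : Measure Ω}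
    [IsFiniteMeasure ν] {X : Ω → ℝ} (hX : MemLp X 2 ν) {s t d p : ℝ} (hd : 0 < d)
    (hst : s + d ≤ t) (hs : p ≤ ν.real {ω | X ω ≤ s}) (ht : p ≤ ν.real {ω | t < X ω}) :
    p * (d / 2) ^ 2 ≤ variance X ν := by
  have hfar : ν.real {ω | X ω ≤ s} ≤ ν.real {ω | d / 2 ≤ |X ω - ν[X]|} ∨
      ν.real {ω | t < X ω} ≤ ν.real {ω | d / 2 ≤ |X ω - ν[X]|} := by
    rcases le_or_gt ν[X] ((s + t) / 2) with hmean | hmean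
    · refine .inr (measureReal_mono fun ω (hω : t < X ω) => ?_)
      exact le_abs.2 (.inl (by linarith : d / 2 ≤ X ω - ν[X]))
    · refine .inl (measureReal_mono fun ω (hω : X ω ≤ s) => ?_)
      exact le_abs.2 (.inr (by linarith : d / 2 ≤ -(X ω - ν[X])))
  have hcheb : ν.real {ω | d / 2 ≤ |X ω - ν[X]|} ≤ variance X ν / (d / 2) ^ 2 := by
    rw [measureReal_def]
    exact ENNReal.toReal_le_of_le_ofReal (by positivity [variance_nonneg X ν])
      (meas_ge_le_variance_div_sq hX (by positivity))
  rw [← le_div_iff₀ (by positivity)]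
  rcases hfar with h | h <;> linarith

theorem MeasureTheory.MemLp.cond {Ω E : Type*} [MeasurableSpace Ω] [NormedAddCommGroup E]
    {μ : Measure Ω} {f : Ω → E} {p : ENNReal} (hf : MemLp f p μ) {s : Set Ω} (hs : μ s ≠ 0) :
    MemLp f p μ[|s] :=
  (hf.restrict s).smul_measure (ENNReal.inv_ne_top.2 hs)

namespace HasStretchedExpTail

variable {Ω : Type*} [MeasurableSpace Ω] {μ : Measure Ω} {X : Ω → ℝ} {β : ℝ}

theorem ae_pos [IsProbabilityMeasure μ] (h : HasStretchedExpTail μ X β) (hX : Measurable X)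
    (hβ : 0 < β) : ∀ᵐ ω ∂μ, 0 < X ω := by
  rw [ae_iff, ← compl_ofPred, prob_compl_eq_zero_iff (measurableSet_lt measurable_const hX),
    h 0 le_rfl, zero_rpow hβ.ne', neg_zero, exp_zero, ENNReal.ofReal_one]

theorem memLp_two [IsProbabilityMeasure μ] (h : HasStretchedExpTail μ X β) (hX : Measurable X)
    (hβ : 0 < β) : MemLp X 2 μ := by
  have hpos : 0 ≤ᵐ[μ] X := (h.ae_pos hX hβ).mono fun ω hω => hω.le
  rw [memLp_two_iff_integrable_sq hX.aestronglyMeasurable]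
  refine ⟨(hX.pow_const 2).aestronglyMeasurable, ?_⟩
  rw [hasFiniteIntegral_iff_ofReal (ae_of_all _ fun ω => sq_nonneg _)]
  simp_rw [← rpow_two]
  rw [lintegral_rpow_eq_lintegral_meas_lt_mul μ hpos hX.aemeasurable two_pos]
  refine ENNReal.mul_lt_top ENNReal.ofReal_lt_top ?_
  have hint := integrableOn_rpow_mul_exp_neg_rpow (s := 1) (by norm_num) hβ
  rw [setLIntegral_congr_fun measurableSet_Ioi fun t ht => by
    rw [h t (le_of_lt ht), ← ENNReal.ofReal_mul (exp_pos _).le, mul_comm]]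
  convert hint.setLIntegral_lt_top using 6
  norm_num

theorem cond_measureReal_lt (h : HasStretchedExpTail μ X β) (hX : Measurable X) {k x : ℝ}
    (hk : 0 ≤ k) (hkx : k ≤ x) :
    (μ[|{ω | k < X ω}]).real {ω | x < X ω} = exp (k ^ β - x ^ β) := by
  have hsub : {ω | x < X ω} ⊆ {ω | k < X ω} := fun ω (hω : x < X ω) => hkx.trans_lt hω
  rw [measureReal_def, cond_apply (measurableSet_lt measurable_const hX),
    inter_eq_self_of_subset_right hsub, h x (hk.trans hkx), h k hk, ENNReal.toReal_mul,
    ENNReal.toReal_inv, ENNReal.toReal_ofReal (exp_pos _).le,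
    ENNReal.toReal_ofReal (exp_pos _).le, ← exp_neg, ← exp_add]
  ring_nf

theorem cond_measureReal_lt_rpow (h : HasStretchedExpTail μ X β) (hX : Measurable X)
    (hβ : 0 < β) {k c : ℝ} (hk : 0 ≤ k) (hc : 0 ≤ c) :
    (μ[|{ω | k < X ω}]).real {ω | (k ^ β + c) ^ β⁻¹ < X ω} = exp (-c) := by
  have hkβ : 0 ≤ k ^ β := rpow_nonneg hk β
  have hk_le : k ≤ (k ^ β + c) ^ β⁻¹ := by
    calc k = (k ^ β) ^ β⁻¹ := (rpow_rpow_inv hk hβ.ne').symm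
      _ ≤ (k ^ β + c) ^ β⁻¹ := by gcongr; linarith
  rw [h.cond_measureReal_lt hX hk hk_le, rpow_inv_rpow (by linarith) hβ.ne']
  ring_nf

end HasStretchedExpTail

/-- For a random variable with stretched-exponential tail `P(X > x) = e^{−x^β}`, `β ∈ (0,1]`,
there is a `c > 0` with `Var(X | X > k) ≥ c` for all `k ≥ 0`. -/
theorem stretched_exp_conditional_var {Ω : Type*} [MeasurableSpace Ω] (μ : Measure Ω)
    [IsProbabilityMeasure μ] (X : Ω → ℝ) (hX : Measurable X)
    (β : ℝ) (hβ : β ∈ Set.Ioc (0 : ℝ) 1)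
    (hsurv : ∀ x : ℝ, 0 ≤ x → μ {ω | x < X ω} = ENNReal.ofReal (Real.exp (-(x ^ β)))) :
    ∃ c > 0, ∀ k : ℝ, 0 ≤ k →
      c ≤ variance X (ProbabilityTheory.cond μ {ω | k < X ω}) := by
  obtain ⟨hβ0, hβ1⟩ := hβ
  have htail : HasStretchedExpTail μ X β := hsurv
  refine ⟨exp (-2) / 4, by positivity, fun k hk => ?_⟩
  have hS : μ {ω | k < X ω} ≠ 0 := by simp [hsurv k hk, exp_pos]
  have := cond_isProbabilityMeasure (μ := μ) hS
  set m := (k ^ β + 1) ^ β⁻¹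
  have hgap : m + 1 ≤ (k ^ β + 2) ^ β⁻¹ := by
    have := add_rpow_le_rpow_add (by positivity : 0 ≤ k ^ β + 1) zero_le_one
      ((one_le_inv₀ hβ0).2 hβ1)
    rw [one_rpow] at this
    convert this using 2; ring
  have hlow : exp (-2) ≤ (μ[|{ω | k < X ω}]).real {ω | X ω ≤ m} := by
    have hcompl : {ω | X ω ≤ m} = {ω | m < X ω}ᶜ := by ext; simp
    rw [hcompl, probReal_compl_eq_one_sub (measurableSet_lt measurable_const hX),
      htail.cond_measureReal_lt_rpow hX hβ0 hk zero_le_one]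
    linarith [exp_neg_one_lt_half, exp_le_exp.2 (by norm_num : (-2 : ℝ) ≤ -1)]
  have hvar := mul_sq_le_variance_of_le_measureReal ((htail.memLp_two hX hβ0).cond hS)
    one_pos hgap hlow (htail.cond_measureReal_lt_rpow hX hβ0 hk zero_le_two).ge
  linarith
end
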